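/- arXiv:1810.05059 — 6 statements merged into one kernel-verified Lean document; each statement's English description precedes it below -/
import Mathlib

section
/- Suppose B_H has linearly independent columns lying in V, C_H = B_Hᵀ, K is symmetric and positive definite on V, and F ∈ ℝ^n. Let u_ms ∈ V_ms satisfy vᵀK u_ms = vᵀF for all v ∈ V_ms, and let u_f ∈ W satisfy wᵀK u_f = wᵀF for all w ∈ W. Then the sum u = u_ms + u_f satisfies vᵀK u = vᵀF for all v ∈ V; that is, u solves the original full network problem. -/
open Matrix

/-- If `u_ms` solves the multiscale problem and `u_f` solves the detail
(correction) problem, then `u = u_ms + u_f` solves the original full network problem. -/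
theorem stmt_6 {n m : ℕ} (hn : 0 < n) (hm : 0 < m) (hmn : m ≤ n)
    (K : Matrix (Fin n) (Fin n) ℝ) (V : Submodule ℝ (Fin n → ℝ))
    (hK : K.IsSymm)
    (hKpos : ∀ v ∈ V, v ≠ 0 → 0 < v ⬝ᵥ K.mulVec v)
    (B : Matrix (Fin n) (Fin m) ℝ) (C : Matrix (Fin m) (Fin n) ℝ)
    (hB : LinearIndependent ℝ (fun i : Fin m => fun j : Fin n => B j i))
    (hBV : ∀ i : Fin m, (fun j : Fin n => B j i) ∈ V)
    (hC : C = B.transpose)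
    (W Vms : Set (Fin n → ℝ))
    (hW : W = {w | w ∈ V ∧ C.mulVec w = 0})
    (hVms : Vms = {v | v ∈ V ∧ ∀ w ∈ W, w ⬝ᵥ K.mulVec v = 0})
    (F : Fin n → ℝ)
    (ums : Fin n → ℝ) (hums : ums ∈ Vms)
    (humsSol : ∀ v ∈ Vms, v ⬝ᵥ K.mulVec ums = v ⬝ᵥ F)
    (uf : Fin n → ℝ) (huf : uf ∈ W)
    (hufSol : ∀ w ∈ W, w ⬝ᵥ K.mulVec uf = w ⬝ᵥ F) :
    ∀ v ∈ V, v ⬝ᵥ K.mulVec (ums + uf) = v ⬝ᵥ F := by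
  -- symmetry of the bilinear form
  have hsymm : ∀ x y : Fin n → ℝ, x ⬝ᵥ K.mulVec y = y ⬝ᵥ K.mulVec x := by
    intro x y
    rw [Matrix.dotProduct_mulVec, ← Matrix.vecMul_transpose, hK.eq, dotProduct_comm]
  -- the bilinear form induced by K on ↥V
  let Bf : LinearMap.BilinForm ℝ ↥V :=
    LinearMap.mk₂ ℝ (fun x y => (x : Fin n → ℝ) ⬝ᵥ K.mulVec (y : Fin n → ℝ))
      (fun x y z => by simp [add_dotProduct])
      (fun r x y => by simp [smul_dotProduct])
      (fun x y z => by simp [Matrix.mulVec_add, dotProduct_add])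
      (fun r x y => by simp [Matrix.mulVec_smul, dotProduct_smul])
  have hBf_apply : ∀ x y : ↥V, Bf x y = (x : Fin n → ℝ) ⬝ᵥ K.mulVec (y : Fin n → ℝ) :=
    fun x y => rfl
  have hBfrefl : Bf.IsRefl := by
    intro x y h
    rw [hBf_apply] at h ⊢
    rw [hsymm]; exact h
  -- W as a submodule of ↥V
  let W' : Submodule ℝ ↥V :=
    Submodule.comap ((Matrix.mulVecLin C).comp V.subtype) ⊥
  have hW'mem : ∀ x : ↥V, x ∈ W' ↔ C.mulVec (x : Fin n → ℝ) = 0 := by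
    intro x
    simp [W', Matrix.mulVecLin]
  -- K restricted to W' is nondegenerate (it is positive definite)
  have hnd : (Bf.restrict W').Nondegenerate := by
    have hrr : LinearMap.IsRefl (Bf.restrict W') := fun a b h => hBfrefl (a : ↥V) (b : ↥V) h
    suffices hsl : LinearMap.SeparatingLeft (Bf.restrict W') from
      ⟨hsl, fun x hx => hsl x (fun y => hrr _ _ (hx y))⟩
    intro x hx
    have hxx := hx x
    simp only [LinearMap.BilinForm.restrict_apply, LinearMap.domRestrict_apply] at hxx
    rw [hBf_apply] at hxx
    by_contra h
    have hx0 : ((x : ↥V) : Fin n → ℝ) ≠ 0 := by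
      intro h0
      exact h (Subtype.ext (Subtype.ext h0))
    have := hKpos _ (x : ↥V).2 hx0
    rw [hxx] at this
    exact lt_irrefl 0 this
  have hcompl := Bf.isCompl_orthogonal_of_restrict_nondegenerate hBfrefl hnd (W := W')
  intro v hv
  -- decompose v = y + z with y ∈ W', z ∈ orthogonal
  have htop : (⟨v, hv⟩ : ↥V) ∈ W' ⊔ Bf.orthogonal W' := by
    rw [hcompl.sup_eq_top]; trivial
  obtain ⟨y, hy, z, hz, hvyz⟩ := Submodule.mem_sup.mp htop
  have hyW : (y : Fin n → ℝ) ∈ W := by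
    rw [hW]; exact ⟨y.2, (hW'mem y).mp hy⟩
  have hz2 : ∀ w ∈ W, w ⬝ᵥ K.mulVec (z : Fin n → ℝ) = 0 := by
    intro w hw
    rw [hW] at hw
    have hw' : (⟨w, hw.1⟩ : ↥V) ∈ W' := (hW'mem ⟨w, hw.1⟩).mpr hw.2
    exact hz ⟨w, hw.1⟩ hw'
  have hzVms : (z : Fin n → ℝ) ∈ Vms := by
    rw [hVms]; exact ⟨z.2, hz2⟩
  have hv_eq : v = (y : Fin n → ℝ) + (z : Fin n → ℝ) := by
    have := congrArg Subtype.val hvyz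
    exact this.symm
  have humsV := hums; rw [hVms] at humsV
  have h1 : (y : Fin n → ℝ) ⬝ᵥ K.mulVec ums = 0 := humsV.2 _ hyW
  have h2 : (z : Fin n → ℝ) ⬝ᵥ K.mulVec uf = 0 := by
    rw [hsymm]; exact hz2 _ huf
  have h3 : (z : Fin n → ℝ) ⬝ᵥ K.mulVec ums = (z : Fin n → ℝ) ⬝ᵥ F :=
    humsSol _ hzVms
  have h4 : (y : Fin n → ℝ) ⬝ᵥ K.mulVec uf = (y : Fin n → ℝ) ⬝ᵥ F :=
    hufSol _ hyW
  rw [hv_eq]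
  simp only [Matrix.mulVec_add, add_dotProduct, dotProduct_add, h1, h2, h3, h4]
  ring
end

section
/- Suppose K is symmetric and positive definite on V, B_H has linearly independent columns λ_1, …, λ_m lying in V, and C_H = B_Hᵀ. For each i let φ_i ∈ W be the (unique) solution of wᵀK(λ_i − φ_i) = 0 for all w ∈ W. Then the vectors λ_1 − φ_1, …, λ_m − φ_m all lie in V_ms, are linearly independent, and span V_ms; that is, they constitute a basis for V_ms. -/
open Matrix

private lemma aux_mulVec_sum_smul {n k m : ℕ} (M : Matrix (Fin k) (Fin n) ℝ)
    (f : Fin m → Fin n → ℝ) (c : Fin m → ℝ) :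
    M *ᵥ (∑ i, c i • f i) = ∑ i, c i • (M *ᵥ f i) := by
  simp [Matrix.mulVec_sum, Matrix.mulVec_smul]

private lemma aux_dot_sum {n m : ℕ} (w : Fin n → ℝ) (f : Fin m → Fin n → ℝ) :
    w ⬝ᵥ (∑ i, f i) = ∑ i, w ⬝ᵥ f i := by
  simp [dotProduct, Finset.sum_apply, Finset.mul_sum]
  rw [Finset.sum_comm]

/-- The modified vectors `λ_i − φ_i` lie in `V_ms`, are linearly independent,
and span `V_ms`; i.e. they form a basis for the multiscale space. -/
theorem stmt_7 {n m : ℕ} (hn : 0 < n) (hm : 0 < m) (hmn : m ≤ n)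
    (K : Matrix (Fin n) (Fin n) ℝ) (V : Submodule ℝ (Fin n → ℝ))
    (hK : K.IsSymm)
    (hKpos : ∀ v ∈ V, v ≠ 0 → 0 < v ⬝ᵥ K.mulVec v)
    (B : Matrix (Fin n) (Fin m) ℝ) (C : Matrix (Fin m) (Fin n) ℝ)
    (hB : LinearIndependent ℝ (fun i : Fin m => fun j : Fin n => B j i))
    (hBV : ∀ i : Fin m, (fun j : Fin n => B j i) ∈ V)
    (hC : C = B.transpose)
    (W Vms : Set (Fin n → ℝ))
    (hW : W = {w | w ∈ V ∧ C.mulVec w = 0})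
    (hVms : Vms = {v | v ∈ V ∧ ∀ w ∈ W, w ⬝ᵥ K.mulVec v = 0})
    (φ : Fin m → (Fin n → ℝ))
    (hφW : ∀ i, φ i ∈ W)
    (hφ : ∀ i, ∀ w ∈ W, w ⬝ᵥ K.mulVec ((fun j : Fin n => B j i) - φ i) = 0) :
    (∀ i, ((fun j : Fin n => B j i) - φ i) ∈ Vms) ∧
    LinearIndependent ℝ (fun i : Fin m => (fun j : Fin n => B j i) - φ i) ∧
    (Submodule.span ℝ (Set.range (fun i : Fin m => (fun j : Fin n => B j i) - φ i)) :
      Set (Fin n → ℝ)) = Vms := by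
  -- notation
  set lam : Fin m → (Fin n → ℝ) := fun i => fun j => B j i with hlam
  set ψ : Fin m → (Fin n → ℝ) := fun i => lam i - φ i with hψ
  have hφV : ∀ i, φ i ∈ V := fun i => ((hW ▸ hφW i) : _).1
  have hφC : ∀ i, Bᵀ *ᵥ φ i = 0 := fun i => hC ▸ ((hW ▸ hφW i) : _).2
  have hmul : ∀ c : Fin m → ℝ, B *ᵥ c = ∑ i, c i • lam i := by
    intro c; funext j
    simp [Matrix.mulVec, dotProduct, Finset.sum_apply, hlam, mul_comm]
  have hB' : ∀ c : Fin m → ℝ, B *ᵥ c = 0 → c = 0 := by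
    intro c hc
    funext i
    exact Fintype.linearIndependent_iff.mp hB c (by rw [← hmul]; exact hc) i
  -- key: Bᵀ *ᵥ x = 0 for x = B *ᵥ c implies c = 0
  have hkey : ∀ c : Fin m → ℝ, Bᵀ *ᵥ (B *ᵥ c) = 0 → c = 0 := by
    intro c hc
    apply hB'
    rw [← dotProduct_self_eq_zero (v := B *ᵥ c)]
    rw [Matrix.dotProduct_mulVec, ← Matrix.mulVec_transpose, hc]
    simp
  -- part 1
  have hψV : ∀ i, ψ i ∈ V := fun i => V.sub_mem (hBV i) (hφV i)
  have part1 : ∀ i, ψ i ∈ Vms := by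
    intro i
    rw [hVms]
    exact ⟨hψV i, hφ i⟩
  refine ⟨part1, ?_, ?_⟩
  · -- linear independence
    rw [Fintype.linearIndependent_iff]
    intro c hc i
    have hsplit : ∑ j, c j • ψ j = B *ᵥ c - ∑ j, c j • φ j := by
      rw [hmul, ← Finset.sum_sub_distrib]
      exact Finset.sum_congr rfl (fun j _ => smul_sub (c j) (lam j) (φ j))
    have hs : B *ᵥ c = ∑ j, c j • φ j := by
      have := hsplit ▸ hc
      exact sub_eq_zero.mp this
    have : Bᵀ *ᵥ (B *ᵥ c) = 0 := by
      rw [hs, aux_mulVec_sum_smul]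
      simp [hφC]
    have := hkey c this
    exact congrFun this i
  · -- span = Vms
    apply Set.eq_of_subset_of_subset
    · -- span ⊆ Vms
      intro x hx
      rw [hVms]
      refine Submodule.span_induction ?_ ?_ ?_ ?_ hx
      · rintro _ ⟨i, rfl⟩
        exact hVms ▸ part1 i
      · exact ⟨V.zero_mem, fun w _ => by simp⟩
      · rintro a b _ _ ⟨haV, ha⟩ ⟨hbV, hb⟩
        refine ⟨V.add_mem haV hbV, fun w hw => ?_⟩
        rw [Matrix.mulVec_add, dotProduct_add, ha w hw, hb w hw, add_zero]
      · rintro r a _ ⟨haV, ha⟩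
        refine ⟨V.smul_mem r haV, fun w hw => ?_⟩
        rw [Matrix.mulVec_smul, dotProduct_smul, ha w hw, smul_zero]
    · -- Vms ⊆ span
      intro v hv
      rw [hVms] at hv
      obtain ⟨hvV, hvorth⟩ := hv
      -- find c with (Bᵀ * B) *ᵥ c = Bᵀ *ᵥ v
      have hinj : Function.Injective ((Bᵀ * B).mulVecLin) := by
        intro a b hab
        have : (Bᵀ * B) *ᵥ (a - b) = 0 := by
          simp only [← Matrix.mulVecLin_apply] at hab ⊢
          rw [map_sub, hab, sub_self]
        have := hkey (a - b) (by rwa [Matrix.mulVec_mulVec])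
        exact sub_eq_zero.mp this
      obtain ⟨c, hc⟩ := (LinearMap.injective_iff_surjective).mp hinj (Bᵀ *ᵥ v)
      simp only [Matrix.mulVecLin_apply] at hc
      set p : Fin n → ℝ := ∑ j, c j • φ j with hp
      set u : Fin n → ℝ := v - (B *ᵥ c - p) with hu
      have hsplit : ∑ j, c j • ψ j = B *ᵥ c - p := by
        rw [hmul, hp, ← Finset.sum_sub_distrib]
        exact Finset.sum_congr rfl (fun j _ => smul_sub (c j) (lam j) (φ j))
      have hpV : p ∈ V := Submodule.sum_mem V (fun j _ => V.smul_mem _ (hφV j))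
      have hBcV : B *ᵥ c ∈ V := by
        rw [hmul]
        exact Submodule.sum_mem V (fun j _ => V.smul_mem _ (hBV j))
      have huV : u ∈ V := V.sub_mem hvV (V.sub_mem hBcV hpV)
      have huC : Bᵀ *ᵥ u = 0 := by
        rw [hu, Matrix.mulVec_sub, Matrix.mulVec_sub, hp, aux_mulVec_sum_smul]
        have : ∑ j, c j • (Bᵀ *ᵥ φ j) = 0 := by simp [hφC]
        rw [this, Matrix.mulVec_mulVec, hc]
        simp
      have huW : u ∈ W := by
        rw [hW]
        exact ⟨huV, by rw [hC]; exact huC⟩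
      have huorth : ∀ w ∈ W, w ⬝ᵥ K *ᵥ u = 0 := by
        intro w hw
        rw [hu, Matrix.mulVec_sub, dotProduct_sub, hvorth w hw, ← hsplit]
        have : K *ᵥ (∑ j, c j • ψ j) = ∑ j, c j • (K *ᵥ ψ j) := aux_mulVec_sum_smul K ψ c
        rw [this, aux_dot_sum]
        have hz : ∀ j, w ⬝ᵥ (c j • (K *ᵥ ψ j)) = 0 := by
          intro j
          rw [dotProduct_smul, hφ j w hw, smul_zero]
        simp [hz]
      have hu0 : u = 0 := by
        by_contra h
        have := hKpos u huV h
        rw [huorth u huW] at this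
        exact lt_irrefl 0 this
      have hveq : v = ∑ j, c j • ψ j := by
        rw [hsplit]
        exact sub_eq_zero.mp hu0
      rw [hveq]
      exact Submodule.sum_mem _ (fun j _ =>
        Submodule.smul_mem _ _ (Submodule.subset_span ⟨j, rfl⟩))
end

section
/- Suppose B_H has linearly independent columns lying in V, C_H = B_Hᵀ, K is symmetric and positive definite on V, and the load vector F lies in the coarse space V_H. Let u ∈ V satisfy vᵀK u = vᵀF for all v ∈ V and let u_ms ∈ V_ms satisfy vᵀK u_ms = vᵀF for all v ∈ V_ms. Then u = u_ms. -/
open Matrix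

/-- If the load vector `F` lies in the coarse space `V_H`, then the
multiscale solution coincides with the full solution: `u = u_ms`. -/
theorem stmt_11 {n m : ℕ} (hn : 0 < n) (hm : 0 < m) (hmn : m ≤ n)
    (K : Matrix (Fin n) (Fin n) ℝ) (V : Submodule ℝ (Fin n → ℝ))
    (hK : K.IsSymm)
    (hKpos : ∀ v ∈ V, v ≠ 0 → 0 < v ⬝ᵥ K.mulVec v)
    (B : Matrix (Fin n) (Fin m) ℝ) (C : Matrix (Fin m) (Fin n) ℝ)
    (hB : LinearIndependent ℝ (fun i : Fin m => fun j : Fin n => B j i))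
    (hBV : ∀ i : Fin m, (fun j : Fin n => B j i) ∈ V)
    (hC : C = B.transpose)
    (W Vms : Set (Fin n → ℝ))
    (hW : W = {w | w ∈ V ∧ C.mulVec w = 0})
    (hVms : Vms = {v | v ∈ V ∧ ∀ w ∈ W, w ⬝ᵥ K.mulVec v = 0})
    (F : Fin n → ℝ)
    (hF : F ∈ Submodule.span ℝ (Set.range (fun i : Fin m => fun j : Fin n => B j i)))
    (u : Fin n → ℝ) (huV : u ∈ V) (hu : ∀ v ∈ V, v ⬝ᵥ K.mulVec u = v ⬝ᵥ F)
    (ums : Fin n → ℝ) (humsV : ums ∈ Vms)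
    (hums : ∀ v ∈ Vms, v ⬝ᵥ K.mulVec ums = v ⬝ᵥ F) :
    u = ums := by
  subst hC hW hVms
  -- F is orthogonal to W
  have hFW : ∀ w : Fin n → ℝ, Bᵀ.mulVec w = 0 → w ⬝ᵥ F = 0 := by
    intro w hw
    clear hu hums
    induction hF using Submodule.span_induction with
    | mem x hx =>
      obtain ⟨i, rfl⟩ := hx
      have h := congrFun hw i
      simpa [Matrix.mulVec, dotProduct, Matrix.transpose, mul_comm] using h
    | zero => simp
    | add x y _ _ hx hy => simp [dotProduct_add, hx, hy]
    | smul c x _ hx => simp [dotProduct_smul, hx]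
  -- u is in Vms
  have huMs : u ∈ {v | v ∈ V ∧ ∀ w ∈ {w | w ∈ V ∧ Bᵀ.mulVec w = 0}, w ⬝ᵥ K.mulVec v = 0} := by
    refine ⟨huV, fun w hw => ?_⟩
    rw [hu w hw.1]
    exact hFW w hw.2
  set d := u - ums with hd
  have hdV : d ∈ V := V.sub_mem huV humsV.1
  have hdMs : d ∈ {v | v ∈ V ∧ ∀ w ∈ {w | w ∈ V ∧ Bᵀ.mulVec w = 0}, w ⬝ᵥ K.mulVec v = 0} := by
    refine ⟨hdV, fun w hw => ?_⟩
    rw [hd, Matrix.mulVec_sub, dotProduct_sub, huMs.2 w hw, humsV.2 w hw, sub_zero]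
  have h1 : d ⬝ᵥ K.mulVec u = d ⬝ᵥ F := hu d hdV
  have h2 : d ⬝ᵥ K.mulVec ums = d ⬝ᵥ F := hums d hdMs
  have hdd : d ⬝ᵥ K.mulVec d = 0 := by
    have e : d ⬝ᵥ K.mulVec d = d ⬝ᵥ K.mulVec u - d ⬝ᵥ K.mulVec ums := by
      rw [hd, Matrix.mulVec_sub, dotProduct_sub]
    rw [e, h1, h2, sub_self]
  by_contra hne
  have hd0 : d ≠ 0 := sub_ne_zero.mpr hne
  have := hKpos d hdV hd0
  rw [hdd] at this
  exact lt_irrefl 0 this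
end

section
/- Suppose B_H has linearly independent columns lying in V, C_H = B_Hᵀ, K is symmetric and positive definite on V, and the Poincaré-type bound ‖v‖ ≤ C |||v||| holds for all v ∈ V. Let Ṽ_ms ⊆ V be a linear subspace (the localized multiscale space) satisfying the decay property: for every w ∈ V_ms there exists v ∈ Ṽ_ms with |||w − v||| ≤ ε |||w|||, for some ε ≥ 0. Assume the load vector F lies in V_H, let u_ms ∈ V_ms satisfy vᵀK u_ms = vᵀF for all v ∈ V_ms, and let ũ_ms ∈ Ṽ_ms satisfy vᵀK ũ_ms = vᵀF for all v ∈ Ṽ_ms. Then |||u_ms − ũ_ms||| ≤ ε C ‖F‖. -/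
open Matrix

lemma dot_symm_aux {n : ℕ} (K : Matrix (Fin n) (Fin n) ℝ) (hK : K.IsSymm)
    (x y : Fin n → ℝ) : y ⬝ᵥ K.mulVec x = x ⬝ᵥ K.mulVec y := by
  rw [Matrix.dotProduct_mulVec, ← Matrix.mulVec_transpose, hK.eq, dotProduct_comm]

lemma cs_aux {n : ℕ} (K : Matrix (Fin n) (Fin n) ℝ)
    (hsymm : ∀ x y : Fin n → ℝ, y ⬝ᵥ K.mulVec x = x ⬝ᵥ K.mulVec y)
    (V : Submodule ℝ (Fin n → ℝ))
    (hnn : ∀ v ∈ V, 0 ≤ v ⬝ᵥ K.mulVec v) {x y : Fin n → ℝ}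
    (hx : x ∈ V) (hy : y ∈ V) :
    x ⬝ᵥ K.mulVec y ≤ Real.sqrt (x ⬝ᵥ K.mulVec x) * Real.sqrt (y ⬝ᵥ K.mulVec y) := by
  have key : ∀ t : ℝ, 0 ≤ (y ⬝ᵥ K.mulVec y) * t ^ 2 + (2 * (x ⬝ᵥ K.mulVec y)) * t
      + (x ⬝ᵥ K.mulVec x) := by
    intro t
    have hmem : x + t • y ∈ V := add_mem hx (Submodule.smul_mem _ _ hy)
    have h := hnn _ hmem
    have hexp : (x + t • y) ⬝ᵥ K.mulVec (x + t • y)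
        = (y ⬝ᵥ K.mulVec y) * t ^ 2 + (2 * (x ⬝ᵥ K.mulVec y)) * t + (x ⬝ᵥ K.mulVec x) := by
      rw [Matrix.mulVec_add, Matrix.mulVec_smul, dotProduct_add, add_dotProduct,
        add_dotProduct, dotProduct_smul, dotProduct_smul, smul_dotProduct, smul_dotProduct,
        hsymm x y]
      simp only [smul_eq_mul]
      ring
    linarith [hexp ▸ h]
  have hd : discrim (y ⬝ᵥ K.mulVec y) (2 * (x ⬝ᵥ K.mulVec y)) (x ⬝ᵥ K.mulVec x) ≤ 0 :=
    discrim_le_zero (fun t => by rw [← pow_two]; exact key t)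
  rw [discrim] at hd
  have h2 : (x ⬝ᵥ K.mulVec y) ^ 2 ≤ (x ⬝ᵥ K.mulVec x) * (y ⬝ᵥ K.mulVec y) := by nlinarith
  calc x ⬝ᵥ K.mulVec y ≤ |x ⬝ᵥ K.mulVec y| := le_abs_self _
    _ = Real.sqrt ((x ⬝ᵥ K.mulVec y) ^ 2) := (Real.sqrt_sq_eq_abs _).symm
    _ ≤ Real.sqrt ((x ⬝ᵥ K.mulVec x) * (y ⬝ᵥ K.mulVec y)) := Real.sqrt_le_sqrt h2
    _ = _ := Real.sqrt_mul (hnn x hx) _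

set_option maxHeartbeats 1000000 in
/-- Localization error for coarse loads: if `F ∈ V_H` and the localized
multiscale space `Ṽ_ms` satisfies the decay property with factor `ε`, then
`|||u_ms − ũ_ms||| ≤ ε C ‖F‖`. -/
theorem stmt_14 {n m : ℕ} (hn : 0 < n) (hm : 0 < m) (hmn : m ≤ n)
    (K : Matrix (Fin n) (Fin n) ℝ) (V : Submodule ℝ (Fin n → ℝ))
    (hK : K.IsSymm)
    (hKpos : ∀ v ∈ V, v ≠ 0 → 0 < v ⬝ᵥ K.mulVec v)
    (C : ℝ) (hC : 0 < C)
    (hPoincare : ∀ v ∈ V, Real.sqrt (v ⬝ᵥ v) ≤ C * Real.sqrt (v ⬝ᵥ K.mulVec v))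
    (B : Matrix (Fin n) (Fin m) ℝ) (CH : Matrix (Fin m) (Fin n) ℝ)
    (hB : LinearIndependent ℝ (fun i : Fin m => fun j : Fin n => B j i))
    (hBV : ∀ i : Fin m, (fun j : Fin n => B j i) ∈ V)
    (hCH : CH = B.transpose)
    (W Vms : Set (Fin n → ℝ))
    (hW : W = {w | w ∈ V ∧ CH.mulVec w = 0})
    (hVms : Vms = {v | v ∈ V ∧ ∀ w ∈ W, w ⬝ᵥ K.mulVec v = 0})
    (Vmstil : Submodule ℝ (Fin n → ℝ)) (hVmstilV : Vmstil ≤ V)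
    (ε : ℝ) (hε : 0 ≤ ε)
    (hdecay : ∀ w ∈ Vms, ∃ v ∈ Vmstil,
      Real.sqrt ((w - v) ⬝ᵥ K.mulVec (w - v)) ≤ ε * Real.sqrt (w ⬝ᵥ K.mulVec w))
    (F : Fin n → ℝ)
    (hF : F ∈ Submodule.span ℝ (Set.range (fun i : Fin m => fun j : Fin n => B j i)))
    (ums : Fin n → ℝ) (humsV : ums ∈ Vms)
    (hums : ∀ v ∈ Vms, v ⬝ᵥ K.mulVec ums = v ⬝ᵥ F)
    (umstil : Fin n → ℝ) (humstilV : umstil ∈ Vmstil)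
    (humstil : ∀ v ∈ Vmstil, v ⬝ᵥ K.mulVec umstil = v ⬝ᵥ F) :
    Real.sqrt ((ums - umstil) ⬝ᵥ K.mulVec (ums - umstil)) ≤ ε * C * Real.sqrt (F ⬝ᵥ F) := by
  have hsymm := dot_symm_aux K hK
  have hnn : ∀ v ∈ V, 0 ≤ v ⬝ᵥ K.mulVec v := by
    intro v hv
    rcases eq_or_ne v 0 with rfl | hv0
    · simp
    · exact (hKpos v hv hv0).le
  -- F is orthogonal to vectors annihilated by CH
  have hWF : ∀ w : Fin n → ℝ, CH.mulVec w = 0 → w ⬝ᵥ F = 0 := by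
    intro w hw
    clear hums humstil
    induction hF using Submodule.span_induction with
    | mem x hx =>
      obtain ⟨i, rfl⟩ := hx
      have h0 := congrFun hw i
      rw [hCH] at h0
      simpa [Matrix.mulVec, dotProduct, mul_comm] using h0
    | zero => simp
    | add x y _ _ hx hy => rw [dotProduct_add, hx, hy, add_zero]
    | smul c x _ hx => rw [dotProduct_smul, hx, smul_zero]
  -- decomposition V = W ⊕ (K-orthogonal of W)
  set Bf : LinearMap.BilinForm ℝ (Fin n → ℝ) := Matrix.toBilin' K with hBf
  have hBfapp : ∀ x y : Fin n → ℝ, Bf x y = x ⬝ᵥ K.mulVec y :=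
    fun x y => Matrix.toBilin'_apply' K x y
  have hrefl : Bf.IsRefl := by
    intro x y h
    rw [hBfapp] at h ⊢
    rw [hsymm]; exact h
  set W' : Submodule ℝ (Fin n → ℝ) := V ⊓ LinearMap.ker CH.mulVecLin with hW'
  have hWmem : ∀ w : Fin n → ℝ, w ∈ W' ↔ w ∈ W := by
    intro w
    rw [hW, Submodule.mem_inf, LinearMap.mem_ker, Matrix.mulVecLin_apply]
    rfl
  have hnd : (Bf.restrict W').Nondegenerate := by
    refine ⟨?_, ?_⟩
    all_goals
      rintro ⟨x, hx⟩ hmem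
      have h0 : x ⬝ᵥ K.mulVec x = 0 := by
        have := hmem ⟨x, hx⟩
        simpa [LinearMap.domRestrict_apply, hBfapp] using this
      have hxV : x ∈ V := (Submodule.mem_inf.mp hx).1
      by_contra hne
      have hx0 : x ≠ 0 := by simpa [Submodule.mk_eq_zero] using hne
      exact (hKpos x hxV hx0).ne' h0
  have hcompl := LinearMap.BilinForm.isCompl_orthogonal_of_restrict_nondegenerate hrefl hnd
  -- Galerkin orthogonality on Vmstil
  have hGal : ∀ z ∈ Vmstil, z ⬝ᵥ K.mulVec (ums - umstil) = 0 := by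
    intro z hz
    obtain ⟨y, hy, o, ho, hyo⟩ := Submodule.mem_sup.mp
      (hcompl.sup_eq_top ▸ Submodule.mem_top : z ∈ W' ⊔ Bf.orthogonal W')
    have hyW : y ∈ W := (hWmem y).mp hy
    have hyV : y ∈ V := (hW ▸ hyW).1
    have hyCH : CH.mulVec y = 0 := (hW ▸ hyW).2
    have hoV : o ∈ V := by
      have : o = z - y := by rw [← hyo]; ring
      rw [this]; exact sub_mem (hVmstilV hz) hyV
    have hoVms : o ∈ Vms := by
      rw [hVms]
      refine ⟨hoV, fun w hw => ?_⟩
      have := (LinearMap.BilinForm.mem_orthogonal_iff.mp ho) w ((hWmem w).mpr hw)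
      rwa [hBfapp] at this
    have hzums : z ⬝ᵥ K.mulVec ums = z ⬝ᵥ F := by
      have hyums : y ⬝ᵥ K.mulVec ums = 0 := (hVms ▸ humsV).2 y hyW
      have hyF : y ⬝ᵥ F = 0 := hWF y hyCH
      calc z ⬝ᵥ K.mulVec ums = (y + o) ⬝ᵥ K.mulVec ums := by rw [hyo]
        _ = y ⬝ᵥ K.mulVec ums + o ⬝ᵥ K.mulVec ums := add_dotProduct _ _ _
        _ = o ⬝ᵥ F := by rw [hyums, hums o hoVms, zero_add]
        _ = y ⬝ᵥ F + o ⬝ᵥ F := by rw [hyF, zero_add]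
        _ = (y + o) ⬝ᵥ F := (add_dotProduct _ _ _).symm
        _ = z ⬝ᵥ F := by rw [hyo]
    rw [Matrix.mulVec_sub, dotProduct_sub, hzums, humstil z hz, sub_self]
  -- main estimate
  have humsVmem : ums ∈ V := (hVms ▸ humsV).1
  obtain ⟨v, hv, hvdecay⟩ := hdecay ums humsV
  have hvV : v ∈ V := hVmstilV hv
  have humstilVV : umstil ∈ V := hVmstilV humstilV
  have heV : ums - umstil ∈ V := sub_mem humsVmem humstilVV
  set e := ums - umstil with he
  set a := Real.sqrt (e ⬝ᵥ K.mulVec e) with ha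
  set b := Real.sqrt (ums ⬝ᵥ K.mulVec ums) with hb
  have ha0 : 0 ≤ a := Real.sqrt_nonneg _
  have hb0 : 0 ≤ b := Real.sqrt_nonneg _
  have ha2 : a ^ 2 = e ⬝ᵥ K.mulVec e := Real.sq_sqrt (hnn e heV)
  have hb2 : b ^ 2 = ums ⬝ᵥ K.mulVec ums := Real.sq_sqrt (hnn ums humsVmem)
  -- b ≤ C * ‖F‖
  have hbF : b ≤ C * Real.sqrt (F ⬝ᵥ F) := by
    have hEu : ums ⬝ᵥ F ≤ Real.sqrt (ums ⬝ᵥ ums) * Real.sqrt (F ⬝ᵥ F) := by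
      have := cs_aux (1 : Matrix (Fin n) (Fin n) ℝ)
        (fun x y => by rw [Matrix.one_mulVec, Matrix.one_mulVec, dotProduct_comm])
        ⊤ (fun v _ => by
          rw [Matrix.one_mulVec]
          exact Finset.sum_nonneg fun i _ => mul_self_nonneg (v i))
        (Submodule.mem_top (x := ums)) (Submodule.mem_top (x := F))
      simpa [Matrix.one_mulVec] using this
    have h1 : b ^ 2 ≤ (C * b) * Real.sqrt (F ⬝ᵥ F) := by
      rw [hb2, hums ums humsV]
      calc ums ⬝ᵥ F ≤ Real.sqrt (ums ⬝ᵥ ums) * Real.sqrt (F ⬝ᵥ F) := hEu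
        _ ≤ (C * b) * Real.sqrt (F ⬝ᵥ F) := by
            apply mul_le_mul_of_nonneg_right _ (Real.sqrt_nonneg _)
            exact hPoincare ums humsVmem
    rcases hb0.lt_or_eq with hbpos | hbeq
    · nlinarith [Real.sqrt_nonneg (F ⬝ᵥ F)]
    · rw [← hbeq]; positivity
  -- a ≤ ε * b
  have hab : a ≤ ε * b := by
    have hEe : e ⬝ᵥ K.mulVec e = (ums - v) ⬝ᵥ K.mulVec e := by
      have h2 : (v - umstil) ⬝ᵥ K.mulVec e = 0 := hGal _ (sub_mem hv humstilV)
      calc e ⬝ᵥ K.mulVec e = ((ums - v) + (v - umstil)) ⬝ᵥ K.mulVec e := by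
            rw [sub_add_sub_cancel]
        _ = (ums - v) ⬝ᵥ K.mulVec e + (v - umstil) ⬝ᵥ K.mulVec e := add_dotProduct _ _ _
        _ = (ums - v) ⬝ᵥ K.mulVec e := by rw [h2, add_zero]
    have hcs : (ums - v) ⬝ᵥ K.mulVec e
        ≤ Real.sqrt ((ums - v) ⬝ᵥ K.mulVec (ums - v)) * a :=
      cs_aux K hsymm V hnn (sub_mem humsVmem hvV) heV
    have h3 : a ^ 2 ≤ (ε * b) * a := by
      rw [ha2, hEe]
      calc (ums - v) ⬝ᵥ K.mulVec e ≤ Real.sqrt ((ums - v) ⬝ᵥ K.mulVec (ums - v)) * a := hcs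
        _ ≤ (ε * b) * a := mul_le_mul_of_nonneg_right hvdecay ha0
    rcases ha0.lt_or_eq with hapos | haeq
    · nlinarith
    · rw [← haeq]; positivity
  calc a ≤ ε * b := hab
    _ ≤ ε * (C * Real.sqrt (F ⬝ᵥ F)) := mul_le_mul_of_nonneg_left hbF hε
    _ = ε * C * Real.sqrt (F ⬝ᵥ F) := by ring
end

section
/- Suppose B_H has linearly independent columns lying in V, C_H = B_Hᵀ, K is symmetric and positive definite on V, the Poincaré-type bound ‖v‖ ≤ C |||v||| holds for all v ∈ V, and the interpolant π_H : ℝ^n → V_H is defined by π_H v = Σ_{i=1}^m (λ_iᵀ v) λ_i = B_H C_H v. Let Ṽ_ms ⊆ V be a linear subspace (the localized multiscale space) satisfying the decay property: for every w ∈ V_ms there exists v ∈ Ṽ_ms with |||w − v||| ≤ ε |||w|||, for some ε ≥ 0. Let F ∈ ℝ^n be an arbitrary load vector, let u ∈ V satisfy vᵀKu = vᵀF for all v ∈ V, and let ũ_ms ∈ Ṽ_ms satisfy vᵀK ũ_ms = vᵀF for all v ∈ Ṽ_ms. Then |||u − ũ_ms||| ≤ 2C ‖F − π_H F‖ + ε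 C (‖F − π_H F‖ + ‖F‖). -/
open Matrix

section Aux15

variable {n : ℕ}

private lemma aux15_symm {K : Matrix (Fin n) (Fin n) ℝ} (hK : K.IsSymm) (x y : Fin n → ℝ) :
    x ⬝ᵥ K.mulVec y = y ⬝ᵥ K.mulVec x := by
  simp only [Matrix.mulVec, dotProduct, Finset.mul_sum]
  rw [Finset.sum_comm]
  refine Finset.sum_congr rfl fun i _ => Finset.sum_congr rfl fun j _ => ?_
  rw [← hK.apply i j]
  ring

private lemma aux15_nonneg {K : Matrix (Fin n) (Fin n) ℝ} {V : Submodule ℝ (Fin n → ℝ)}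
    (hKpos : ∀ v ∈ V, v ≠ 0 → 0 < v ⬝ᵥ K.mulVec v) {x : Fin n → ℝ} (hx : x ∈ V) :
    0 ≤ x ⬝ᵥ K.mulVec x := by
  rcases eq_or_ne x 0 with h | h
  · simp [h]
  · exact (hKpos x hx h).le

private lemma aux15_cs {K : Matrix (Fin n) (Fin n) ℝ} {V : Submodule ℝ (Fin n → ℝ)}
    (hK : K.IsSymm) (hKpos : ∀ v ∈ V, v ≠ 0 → 0 < v ⬝ᵥ K.mulVec v)
    {x y : Fin n → ℝ} (hx : x ∈ V) (hy : y ∈ V) :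
    x ⬝ᵥ K.mulVec y ≤ Real.sqrt (x ⬝ᵥ K.mulVec x) * Real.sqrt (y ⬝ᵥ K.mulVec y) := by
  rcases eq_or_ne y 0 with h | h
  · simp [h]
  · have hyy : 0 < y ⬝ᵥ K.mulVec y := hKpos y hy h
    set t : ℝ := (x ⬝ᵥ K.mulVec y) / (y ⬝ᵥ K.mulVec y) with ht
    have hmem : x - t • y ∈ V := V.sub_mem hx (V.smul_mem t hy)
    have h0 : 0 ≤ (x - t • y) ⬝ᵥ K.mulVec (x - t • y) := aux15_nonneg hKpos hmem
    have hexp : (x - t • y) ⬝ᵥ K.mulVec (x - t • y)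
        = x ⬝ᵥ K.mulVec x - 2 * t * (x ⬝ᵥ K.mulVec y) + t ^ 2 * (y ⬝ᵥ K.mulVec y) := by
      have hsy : y ⬝ᵥ K.mulVec x = x ⬝ᵥ K.mulVec y := aux15_symm hK y x
      simp only [Matrix.mulVec_sub, Matrix.mulVec_smul, sub_dotProduct,
        dotProduct_sub, smul_dotProduct, dotProduct_smul, smul_eq_mul, hsy]
      ring
    have e1 : t * (y ⬝ᵥ K.mulVec y) = x ⬝ᵥ K.mulVec y := div_mul_cancel₀ _ hyy.ne'
    have hsq : (x ⬝ᵥ K.mulVec y) ^ 2 ≤ (x ⬝ᵥ K.mulVec x) * (y ⬝ᵥ K.mulVec y) := by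
      rw [hexp] at h0
      have h2 : t ^ 2 * (y ⬝ᵥ K.mulVec y) = t * (x ⬝ᵥ K.mulVec y) := by
        rw [sq, mul_assoc, e1]
      rw [h2] at h0
      have h3 : t * (x ⬝ᵥ K.mulVec y) ≤ x ⬝ᵥ K.mulVec x := by linarith
      have h4 : (x ⬝ᵥ K.mulVec y) ^ 2 = (t * (x ⬝ᵥ K.mulVec y)) * (y ⬝ᵥ K.mulVec y) := by
        rw [ht]; field_simp
      rw [h4]
      exact mul_le_mul_of_nonneg_right h3 hyy.le
    calc x ⬝ᵥ K.mulVec y ≤ |x ⬝ᵥ K.mulVec y| := le_abs_self _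
      _ = Real.sqrt ((x ⬝ᵥ K.mulVec y) ^ 2) := (Real.sqrt_sq_eq_abs _).symm
      _ ≤ Real.sqrt ((x ⬝ᵥ K.mulVec x) * (y ⬝ᵥ K.mulVec y)) := Real.sqrt_le_sqrt hsq
      _ = _ := Real.sqrt_mul (aux15_nonneg hKpos hx) _

private lemma aux15_div {r M : ℝ} (hr : 0 ≤ r) (hM : 0 ≤ M) (h : r ^ 2 ≤ M * r) : r ≤ M := by
  rcases eq_or_lt_of_le hr with h0 | h0
  · linarith
  · nlinarith

private lemma aux15_dotcs (x g : Fin n → ℝ) :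
    x ⬝ᵥ g ≤ Real.sqrt (x ⬝ᵥ x) * Real.sqrt (g ⬝ᵥ g) := by
  have h1 : (1 : Matrix (Fin n) (Fin n) ℝ).IsSymm := Matrix.isSymm_one
  have h2 : ∀ v ∈ (⊤ : Submodule ℝ (Fin n → ℝ)), v ≠ 0 →
      0 < v ⬝ᵥ (1 : Matrix (Fin n) (Fin n) ℝ).mulVec v := by
    intro v _ hv
    rw [Matrix.one_mulVec]
    exact lt_of_le_of_ne (Finset.sum_nonneg fun i _ => mul_self_nonneg _)
      (fun hc => hv (by
        funext i
        have h3 := (Finset.sum_eq_zero_iff_of_nonneg (fun i _ => mul_self_nonneg (v i))).1 hc.symm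
          i (Finset.mem_univ i)
        have h4 : v i = 0 := by nlinarith [h3]
        simpa using h4))
  simpa [Matrix.one_mulVec] using
    aux15_cs (V := (⊤ : Submodule ℝ (Fin n → ℝ))) h1 h2 (Submodule.mem_top (x := x))
      (Submodule.mem_top (x := g))

private lemma aux15_tri {K : Matrix (Fin n) (Fin n) ℝ} {V : Submodule ℝ (Fin n → ℝ)}
    (hK : K.IsSymm) (hKpos : ∀ v ∈ V, v ≠ 0 → 0 < v ⬝ᵥ K.mulVec v)
    {x y : Fin n → ℝ} (hx : x ∈ V) (hy : y ∈ V) :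
    Real.sqrt ((x + y) ⬝ᵥ K.mulVec (x + y)) ≤
      Real.sqrt (x ⬝ᵥ K.mulVec x) + Real.sqrt (y ⬝ᵥ K.mulVec y) := by
  set sx := Real.sqrt (x ⬝ᵥ K.mulVec x) with hsx
  set sy := Real.sqrt (y ⬝ᵥ K.mulVec y) with hsy
  have hxx : x ⬝ᵥ K.mulVec x = sx ^ 2 := (Real.sq_sqrt (aux15_nonneg hKpos hx)).symm
  have hyy : y ⬝ᵥ K.mulVec y = sy ^ 2 := (Real.sq_sqrt (aux15_nonneg hKpos hy)).symm
  have hcs : x ⬝ᵥ K.mulVec y ≤ sx * sy := aux15_cs hK hKpos hx hy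
  have hexp : (x + y) ⬝ᵥ K.mulVec (x + y)
      = x ⬝ᵥ K.mulVec x + 2 * (x ⬝ᵥ K.mulVec y) + y ⬝ᵥ K.mulVec y := by
    have hs : y ⬝ᵥ K.mulVec x = x ⬝ᵥ K.mulVec y := aux15_symm hK y x
    simp only [Matrix.mulVec_add, add_dotProduct, dotProduct_add, hs]
    ring
  have hle : (x + y) ⬝ᵥ K.mulVec (x + y) ≤ (sx + sy) ^ 2 := by
    rw [hexp, hxx, hyy]; nlinarith
  calc Real.sqrt ((x + y) ⬝ᵥ K.mulVec (x + y)) ≤ Real.sqrt ((sx + sy) ^ 2) :=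
        Real.sqrt_le_sqrt hle
    _ = sx + sy := Real.sqrt_sq (by positivity)

private lemma aux15_negneg (K : Matrix (Fin n) (Fin n) ℝ) (y : Fin n → ℝ) :
    (-y) ⬝ᵥ K.mulVec (-y) = y ⬝ᵥ K.mulVec y := by
  simp [Matrix.mulVec_neg, neg_dotProduct, dotProduct_neg]

private lemma aux15_proj {E : Type*} [AddCommGroup E] [Module ℝ E] [FiniteDimensional ℝ E]
    (Φ : E →ₗ[ℝ] E →ₗ[ℝ] ℝ) (hsymm : ∀ x y, Φ x y = Φ y x)
    (hpos : ∀ x, x ≠ 0 → 0 < Φ x x) (W : Submodule ℝ E) (u : E) :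
    ∃ w ∈ W, ∃ z, u = w + z ∧ ∀ w' ∈ W, Φ w' z = 0 := by
  letI core : InnerProductSpace.Core ℝ E :=
  { inner := fun x y => Φ x y
    conj_inner_symm := fun x y => by simpa using hsymm y x
    re_inner_nonneg := fun x => by
      rcases eq_or_ne x 0 with h | h
      · simp [h]
      · simpa using (hpos x h).le
    add_left := fun x y z => by simp
    smul_left := fun x y r => by simp
    definite := fun x hx => by
      by_contra h
      exact absurd hx (ne_of_gt (hpos x h)) }
  letI : NormedAddCommGroup E := core.toNormedAddCommGroup
  letI : InnerProductSpace ℝ E := InnerProductSpace.ofCore core.toCore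
  haveI : CompleteSpace W := FiniteDimensional.complete ℝ W
  obtain ⟨w, hwW, z, hz, huwz⟩ := W.exists_add_mem_mem_orthogonal u
  exact ⟨w, hwW, z, huwz, fun w' hw' => (Submodule.mem_orthogonal W z).1 hz w' hw'⟩

private lemma aux15_decomp {m : ℕ}
    (K : Matrix (Fin n) (Fin n) ℝ) (V : Submodule ℝ (Fin n → ℝ))
    (hK : K.IsSymm)
    (hKpos : ∀ v ∈ V, v ≠ 0 → 0 < v ⬝ᵥ K.mulVec v)
    (CH : Matrix (Fin m) (Fin n) ℝ)
    (u : Fin n → ℝ) (huV : u ∈ V) :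
    ∃ w z : Fin n → ℝ, w ∈ V ∧ CH.mulVec w = 0 ∧ z ∈ V ∧ u = w + z ∧
      (∀ w' ∈ V, CH.mulVec w' = 0 → w' ⬝ᵥ K.mulVec z = 0) := by
  let Φ : V →ₗ[ℝ] V →ₗ[ℝ] ℝ :=
    LinearMap.mk₂ ℝ (fun x y : V => (x : Fin n → ℝ) ⬝ᵥ K.mulVec (y : Fin n → ℝ))
      (fun x y z => by simp [add_dotProduct])
      (fun r x y => by simp [smul_dotProduct, smul_eq_mul])
      (fun x y z => by simp [Matrix.mulVec_add, dotProduct_add])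
      (fun r x y => by simp [Matrix.mulVec_smul, dotProduct_smul, smul_eq_mul])
  have hsymm : ∀ x y : V, Φ x y = Φ y x := fun x y =>
    aux15_symm hK (x : Fin n → ℝ) (y : Fin n → ℝ)
  have hpos : ∀ x : V, x ≠ 0 → 0 < Φ x x := fun x hx =>
    hKpos x x.2 (fun hc => hx (Subtype.ext hc))
  let Wv : Submodule ℝ V := Submodule.comap V.subtype (LinearMap.ker CH.mulVecLin)
  obtain ⟨w, hwW, z, huwz, horth⟩ := aux15_proj Φ hsymm hpos Wv ⟨u, huV⟩
  refine ⟨w, z, w.2, ?_, z.2, ?_, ?_⟩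
  · simpa [Wv, Matrix.mulVecLin_apply] using hwW
  · exact congrArg Subtype.val huwz
  · intro w₀ hw₀V hw₀C
    exact horth ⟨w₀, hw₀V⟩ (by simp [Wv, Matrix.mulVecLin_apply, hw₀C])

end Aux15

/-- Full error bound for arbitrary loads `F`:
`|||u − ũ_ms||| ≤ 2C ‖F − π_H F‖ + ε C (‖F − π_H F‖ + ‖F‖)`, where `π_H F = B_H C_H F`. -/
theorem stmt_15 {n m : ℕ} (hn : 0 < n) (hm : 0 < m) (hmn : m ≤ n)
    (K : Matrix (Fin n) (Fin n) ℝ) (V : Submodule ℝ (Fin n → ℝ))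
    (hK : K.IsSymm)
    (hKpos : ∀ v ∈ V, v ≠ 0 → 0 < v ⬝ᵥ K.mulVec v)
    (C : ℝ) (hC : 0 < C)
    (hPoincare : ∀ v ∈ V, Real.sqrt (v ⬝ᵥ v) ≤ C * Real.sqrt (v ⬝ᵥ K.mulVec v))
    (B : Matrix (Fin n) (Fin m) ℝ) (CH : Matrix (Fin m) (Fin n) ℝ)
    (hB : LinearIndependent ℝ (fun i : Fin m => fun j : Fin n => B j i))
    (hBV : ∀ i : Fin m, (fun j : Fin n => B j i) ∈ V)
    (hCH : CH = B.transpose)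
    (W Vms : Set (Fin n → ℝ))
    (hW : W = {w | w ∈ V ∧ CH.mulVec w = 0})
    (hVms : Vms = {v | v ∈ V ∧ ∀ w ∈ W, w ⬝ᵥ K.mulVec v = 0})
    (πH : (Fin n → ℝ) → (Fin n → ℝ))
    (hπH : ∀ v : Fin n → ℝ, πH v = B.mulVec (CH.mulVec v))
    (Vmstil : Submodule ℝ (Fin n → ℝ)) (hVmstilV : Vmstil ≤ V)
    (ε : ℝ) (hε : 0 ≤ ε)
    (hdecay : ∀ w ∈ Vms, ∃ v ∈ Vmstil,
      Real.sqrt ((w - v) ⬝ᵥ K.mulVec (w - v)) ≤ ε * Real.sqrt (w ⬝ᵥ K.mulVec w))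
    (F : Fin n → ℝ) (hπHF : πH F ∈ V)
    (u : Fin n → ℝ) (huV : u ∈ V) (hu : ∀ v ∈ V, v ⬝ᵥ K.mulVec u = v ⬝ᵥ F)
    (umstil : Fin n → ℝ) (humstilV : umstil ∈ Vmstil)
    (humstil : ∀ v ∈ Vmstil, v ⬝ᵥ K.mulVec umstil = v ⬝ᵥ F) :
    Real.sqrt ((u - umstil) ⬝ᵥ K.mulVec (u - umstil)) ≤
      2 * C * Real.sqrt ((F - πH F) ⬝ᵥ (F - πH F)) +
      ε * C * (Real.sqrt ((F - πH F) ⬝ᵥ (F - πH F)) + Real.sqrt (F ⬝ᵥ F)) := by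
  classical
  obtain ⟨w, z, hwV, hwC, hzV, huwz, horth⟩ := aux15_decomp K V hK hKpos CH u huV
  have hEFnn : 0 ≤ Real.sqrt ((F - πH F) ⬝ᵥ (F - πH F)) := Real.sqrt_nonneg _
  have hNFnn : 0 ≤ Real.sqrt (F ⬝ᵥ F) := Real.sqrt_nonneg _
  -- z belongs to the ideal multiscale space
  have hzms : z ∈ Vms := by
    rw [hVms]
    refine ⟨hzV, fun w₀ hw₀ => ?_⟩
    rw [hW] at hw₀
    exact horth w₀ hw₀.1 hw₀.2
  -- `w` is orthogonal to `πH F`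
  have hwpi : w ⬝ᵥ πH F = 0 := by
    rw [hπH, Matrix.dotProduct_mulVec]
    have hvm : Matrix.vecMul w B = 0 := by
      rw [← Matrix.mulVec_transpose, ← hCH, hwC]
    rw [hvm, zero_dotProduct]
  have hwF : w ⬝ᵥ F = w ⬝ᵥ (F - πH F) := by
    rw [dotProduct_sub, hwpi, sub_zero]
  -- ideal error bound : |||w||| ≤ C ‖F - πH F‖
  have hww : w ⬝ᵥ K.mulVec w = w ⬝ᵥ (F - πH F) := by
    have hsplit : w ⬝ᵥ K.mulVec u = w ⬝ᵥ K.mulVec w + w ⬝ᵥ K.mulVec z := by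
      rw [huwz, Matrix.mulVec_add, dotProduct_add]
    have h1 := hu w hwV
    have h2 := horth w hwV hwC
    linarith [hwF]
  have hew : Real.sqrt (w ⬝ᵥ K.mulVec w) ≤ C * Real.sqrt ((F - πH F) ⬝ᵥ (F - πH F)) := by
    apply aux15_div (Real.sqrt_nonneg _) (by positivity)
    rw [Real.sq_sqrt (aux15_nonneg hKpos hwV)]
    calc w ⬝ᵥ K.mulVec w = w ⬝ᵥ (F - πH F) := hww
      _ ≤ Real.sqrt (w ⬝ᵥ w) * Real.sqrt ((F - πH F) ⬝ᵥ (F - πH F)) :=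
          aux15_dotcs _ _
      _ ≤ (C * Real.sqrt (w ⬝ᵥ K.mulVec w)) * Real.sqrt ((F - πH F) ⬝ᵥ (F - πH F)) :=
          mul_le_mul_of_nonneg_right (hPoincare w hwV) hEFnn
      _ = C * Real.sqrt ((F - πH F) ⬝ᵥ (F - πH F)) * Real.sqrt (w ⬝ᵥ K.mulVec w) := by ring
  -- stability : |||u||| ≤ C ‖F‖
  have heu : Real.sqrt (u ⬝ᵥ K.mulVec u) ≤ C * Real.sqrt (F ⬝ᵥ F) := by
    apply aux15_div (Real.sqrt_nonneg _) (by positivity)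
    rw [Real.sq_sqrt (aux15_nonneg hKpos huV)]
    calc u ⬝ᵥ K.mulVec u = u ⬝ᵥ F := hu u huV
      _ ≤ Real.sqrt (u ⬝ᵥ u) * Real.sqrt (F ⬝ᵥ F) := aux15_dotcs _ _
      _ ≤ (C * Real.sqrt (u ⬝ᵥ K.mulVec u)) * Real.sqrt (F ⬝ᵥ F) :=
          mul_le_mul_of_nonneg_right (hPoincare u huV) hNFnn
      _ = C * Real.sqrt (F ⬝ᵥ F) * Real.sqrt (u ⬝ᵥ K.mulVec u) := by ring
  -- |||z||| ≤ |||u||| + |||w|||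
  have hzuw : z = u + -w := by rw [huwz]; abel
  have hez : Real.sqrt (z ⬝ᵥ K.mulVec z) ≤
      Real.sqrt (u ⬝ᵥ K.mulVec u) + Real.sqrt (w ⬝ᵥ K.mulVec w) := by
    have htri := aux15_tri hK hKpos huV (V.neg_mem hwV)
    rw [aux15_negneg, ← hzuw] at htri
    exact htri
  -- decay property applied to z
  obtain ⟨v, hvmem, hdec⟩ := hdecay z hzms
  have hvV : v ∈ V := hVmstilV hvmem
  -- Galerkin orthogonality for the localized problem
  have hgal : ∀ x ∈ Vmstil, x ⬝ᵥ K.mulVec (u - umstil) = 0 := by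
    intro x hx
    rw [Matrix.mulVec_sub, dotProduct_sub, hu x (hVmstilV hx), humstil x hx, sub_self]
  -- Céa's lemma
  have humsV : umstil ∈ V := hVmstilV humstilV
  have hcea : Real.sqrt ((u - umstil) ⬝ᵥ K.mulVec (u - umstil)) ≤
      Real.sqrt ((u - v) ⬝ᵥ K.mulVec (u - v)) := by
    apply aux15_div (Real.sqrt_nonneg _) (Real.sqrt_nonneg _)
    rw [Real.sq_sqrt (aux15_nonneg hKpos (V.sub_mem huV humsV))]
    have hsplit : (u - umstil) ⬝ᵥ K.mulVec (u - umstil)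
        = (u - v) ⬝ᵥ K.mulVec (u - umstil) := by
      rw [show (u - umstil) ⬝ᵥ K.mulVec (u - umstil)
          = (u - v) ⬝ᵥ K.mulVec (u - umstil) + (v - umstil) ⬝ᵥ K.mulVec (u - umstil) by
        rw [← add_dotProduct, sub_add_sub_cancel],
        hgal (v - umstil) (Vmstil.sub_mem hvmem humstilV), add_zero]
    calc (u - umstil) ⬝ᵥ K.mulVec (u - umstil) = (u - v) ⬝ᵥ K.mulVec (u - umstil) := hsplit
      _ ≤ _ := aux15_cs hK hKpos (V.sub_mem huV hvV) (V.sub_mem huV humsV)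
  -- |||u - v||| ≤ |||w||| + |||z - v|||
  have huv : u - v = w + (z - v) := by rw [huwz]; abel
  have htri2 : Real.sqrt ((u - v) ⬝ᵥ K.mulVec (u - v)) ≤
      Real.sqrt (w ⬝ᵥ K.mulVec w) + Real.sqrt ((z - v) ⬝ᵥ K.mulVec (z - v)) := by
    rw [huv]
    exact aux15_tri hK hKpos hwV (V.sub_mem hzV hvV)
  -- final combination
  have h5 : ε * Real.sqrt (z ⬝ᵥ K.mulVec z) ≤
      ε * (C * Real.sqrt (F ⬝ᵥ F) + C * Real.sqrt ((F - πH F) ⬝ᵥ (F - πH F))) :=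
    mul_le_mul_of_nonneg_left (hez.trans (add_le_add heu hew)) hε
  have h6 : 0 ≤ C * Real.sqrt ((F - πH F) ⬝ᵥ (F - πH F)) := by positivity
  nlinarith [hcea, htri2, hdec, h5, h6, hew]
end

section
/- Suppose K is symmetric and positive definite on V, B_H has linearly independent columns lying in V, C_H = B_Hᵀ, and F ∈ V_H, so that F = B_H C_H F̄ for some F̄ ∈ V. If u_ms ∈ V_ms satisfies vᵀK u_ms = vᵀF for all v ∈ V_ms, then for every w ∈ W one has wᵀK u_ms = wᵀF (both sides vanishing), and hence vᵀK u_ms = vᵀF holds for all v ∈ V. -/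
open Matrix

/-- If `F ∈ V_H` (so `F = B_H C_H F̄` for some `F̄ ∈ V`) and `u_ms` solves
the multiscale problem, then for every `w ∈ W` both `wᵀK u_ms` and `wᵀF` vanish (so they
agree), and hence `vᵀK u_ms = vᵀF` holds for all `v ∈ V`. -/
theorem stmt_17 {n m : ℕ} (hn : 0 < n) (hm : 0 < m) (hmn : m ≤ n)
    (K : Matrix (Fin n) (Fin n) ℝ) (V : Submodule ℝ (Fin n → ℝ))
    (hK : K.IsSymm)
    (hKpos : ∀ v ∈ V, v ≠ 0 → 0 < v ⬝ᵥ K.mulVec v)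
    (B : Matrix (Fin n) (Fin m) ℝ) (C : Matrix (Fin m) (Fin n) ℝ)
    (hB : LinearIndependent ℝ (fun i : Fin m => fun j : Fin n => B j i))
    (hBV : ∀ i : Fin m, (fun j : Fin n => B j i) ∈ V)
    (hC : C = B.transpose)
    (W Vms : Set (Fin n → ℝ))
    (hW : W = {w | w ∈ V ∧ C.mulVec w = 0})
    (hVms : Vms = {v | v ∈ V ∧ ∀ w ∈ W, w ⬝ᵥ K.mulVec v = 0})
    (F : Fin n → ℝ)
    (hF : F ∈ Submodule.span ℝ (Set.range (fun i : Fin m => fun j : Fin n => B j i)))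
    (Fbar : Fin n → ℝ) (hFbarV : Fbar ∈ V) (hFbar : F = B.mulVec (C.mulVec Fbar))
    (ums : Fin n → ℝ) (humsV : ums ∈ Vms)
    (hums : ∀ v ∈ Vms, v ⬝ᵥ K.mulVec ums = v ⬝ᵥ F) :
    (∀ w ∈ W, w ⬝ᵥ K.mulVec ums = 0 ∧ w ⬝ᵥ F = 0 ∧ w ⬝ᵥ K.mulVec ums = w ⬝ᵥ F) ∧
    (∀ v ∈ V, v ⬝ᵥ K.mulVec ums = v ⬝ᵥ F) := by
  -- symmetry of the form
  have hsymm : ∀ x y : Fin n → ℝ, x ⬝ᵥ K.mulVec y = y ⬝ᵥ K.mulVec x := by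
    intro x y
    rw [dotProduct_mulVec, dotProduct_comm, ← Matrix.mulVec_transpose, hK.eq]
  -- first part
  have hWzero : ∀ w ∈ W, w ⬝ᵥ K.mulVec ums = 0 ∧ w ⬝ᵥ F = 0 ∧
      w ⬝ᵥ K.mulVec ums = w ⬝ᵥ F := by
    intro w hw
    have h1 : w ⬝ᵥ K.mulVec ums = 0 := (hVms ▸ humsV).2 w hw
    have hwC : C.mulVec w = 0 := (hW ▸ hw).2
    have h2 : w ⬝ᵥ F = 0 := by
      rw [hFbar, dotProduct_mulVec, ← Matrix.mulVec_transpose, ← hC, hwC, zero_dotProduct]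
    exact ⟨h1, h2, h1.trans h2.symm⟩
  refine ⟨hWzero, ?_⟩
  -- set up the bilinear form on V
  set Φ : LinearMap.BilinForm ℝ V :=
    LinearMap.mk₂ ℝ (fun x y : V => (x : Fin n → ℝ) ⬝ᵥ K.mulVec (y : Fin n → ℝ))
      (by intro a b c; simp [add_dotProduct])
      (by intro a b c; simp [smul_dotProduct])
      (by intro a b c; simp [Matrix.mulVec_add, dotProduct_add])
      (by intro a b c; simp [Matrix.mulVec_smul, dotProduct_smul]) with hΦ
  have hΦapp : ∀ x y : V, Φ x y = (x : Fin n → ℝ) ⬝ᵥ K.mulVec (y : Fin n → ℝ) := by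
    intro x y; rfl
  have hrefl : Φ.IsRefl := by
    intro x y h
    rw [hΦapp] at h ⊢
    rw [hsymm]; exact h
  -- the subspace W' of V
  set L : V →ₗ[ℝ] (Fin m → ℝ) := (Matrix.mulVecLin C).comp V.subtype with hL
  set W' : Submodule ℝ V := LinearMap.ker L with hW'
  have hmemW' : ∀ x : V, x ∈ W' ↔ C.mulVec (x : Fin n → ℝ) = 0 := by
    intro x; simp [hW', hL, Matrix.mulVecLin]
  have hWW' : ∀ x : V, x ∈ W' ↔ (x : Fin n → ℝ) ∈ W := by
    intro x
    rw [hmemW', hW]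
    exact ⟨fun h => ⟨x.2, h⟩, fun h => h.2⟩
  -- restriction of Φ to W' is nondegenerate (positive definiteness)
  have hnd : (Φ.restrict W').Nondegenerate := by
    have hrefl' : LinearMap.IsRefl (Φ.restrict W') := fun x y h => hrefl (x : V) (y : V) h
    suffices hsep : LinearMap.SeparatingLeft (Φ.restrict W') from
      ⟨hsep, fun y hy => hsep y (fun x => hrefl' x y (hy x))⟩
    intro x hx
    by_contra hx0
    have hxne : ((x : V) : Fin n → ℝ) ≠ 0 := by
      intro h
      apply hx0
      ext
      · exact congrFun h _
    have := hKpos _ (x : V).2 hxne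
    have h0 := hx x
    simp only [LinearMap.BilinForm.restrict_apply, LinearMap.domRestrict_apply, hΦapp] at h0
    rw [h0] at this
    exact lt_irrefl 0 this
  have hcompl := LinearMap.BilinForm.isCompl_orthogonal_of_restrict_nondegenerate hrefl hnd
  -- orthogonal of W' is contained in Vms
  have horth : ∀ x : V, x ∈ Φ.orthogonal W' → (x : Fin n → ℝ) ∈ Vms := by
    intro x hx
    rw [hVms]
    refine ⟨x.2, fun w hw => ?_⟩
    have hwV : w ∈ V := (hW ▸ hw).1
    have : Φ ⟨w, hwV⟩ x = 0 := hx ⟨w, hwV⟩ ((hWW' ⟨w, hwV⟩).2 hw)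
    rwa [hΦapp] at this
  intro v hv
  obtain ⟨w, hwW', o, hoO, hwo⟩ :=
    Submodule.mem_sup.1 (hcompl.sup_eq_top ▸ Submodule.mem_top : (⟨v, hv⟩ : V) ∈ W' ⊔ Φ.orthogonal W')
  have hvwo : v = (w : Fin n → ℝ) + (o : Fin n → ℝ) := by
    have := congrArg (Subtype.val) hwo
    exact this.symm
  have hw1 := hWzero _ ((hWW' w).1 hwW')
  have ho1 := hums _ (horth o hoO)
  rw [hvwo, add_dotProduct, add_dotProduct, hw1.1, hw1.2.1, ho1]
end
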